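/- Let V be a finite-dimensional real vector space, let R be a finite set of nonzero vectors in V, and let F be the finest independent decomposition of R (the unique independent decomposition of R admitting no proper independent refinement). Then a decomposition of R is independent if and only if it is a coarsening of F. -/

import Mathlib

/-!
Independence of a decomposition is a statement about the lattice of subspaces: the spans of
the blocks form a sup-independent family (that they join to `span R` is automatic). Coarsening
preserves this, since a coarse block spans the join of the fine blocks inside it and distinct
coarse blocks contain disjoint sets of fine blocks. Conversely, if `D` is independent, so is the
common refinement `F ⊓ D`, whose blocks are the nonempty `P ∩ B`, because `span (P ∩ B)` lies in
both `span P` and `span B`; minimality of `F` forces `F ⊓ D = F`, that is, `F` refines `D`.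
-/

/-- A decomposition of a finite set `R` of vectors: a collection of nonempty,
pairwise disjoint subsets of `R` whose union is `R`. -/
def IsDecompositionOf {V : Type*} [DecidableEq V] (R : Finset V)
    (D : Finset (Finset V)) : Prop :=
  (∀ P ∈ D, P.Nonempty) ∧ (D : Set (Finset V)).PairwiseDisjoint id ∧ D.sup id = R

/-- A decomposition is independent if the span of `R` is the internal direct sum of the
spans of the blocks. -/
def IsIndependentDecompositionOf {V : Type*} [DecidableEq V] [AddCommGroup V] [Module ℝ V]
    (R : Finset V) (D : Finset (Finset V)) : Prop :=
  IsDecompositionOf R D ∧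
    iSupIndep (fun P : {P // P ∈ D} => Submodule.span ℝ ((P : Finset V) : Set V)) ∧
    (⨆ P : {P // P ∈ D}, Submodule.span ℝ ((P : Finset V) : Set V)) =
      Submodule.span ℝ (R : Set V)

/-- `D` is a refinement of `P` (`P` a coarsening of `D`) if every block of `D` is contained
in some block of `P`. -/
def IsRefinementOf {V : Type*} (D P : Finset (Finset V)) : Prop :=
  ∀ Q ∈ D, ∃ B ∈ P, Q ⊆ B

namespace Finpartition

variable {α β : Type*} [DistribLattice α] [OrderBot α] {a : α}

theorem sup_filter_le_eq_of_le [DecidableLE α] {P Q : Finpartition a} (hPQ : P ≤ Q) {c : α}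
    (hc : c ∈ Q.parts) :
    {p ∈ P.parts | p ≤ c}.sup id = c := by
  refine le_antisymm (Finset.sup_le fun p hp => (Finset.mem_filter.mp hp).2) ?_
  calc c = c ⊓ P.parts.sup id := by rw [P.sup_parts, inf_eq_left.mpr (Q.le hc)]
    _ = P.parts.sup (c ⊓ ·) := Finset.sup_inf_distrib_left _ _ _
    _ ≤ {p ∈ P.parts | p ≤ c}.sup id := Finset.sup_le fun p hp => by
        obtain ⟨d, hd, hpd⟩ := hPQ hp
        by_cases hdc : d = c
        · exact inf_le_right.trans
            (Finset.le_sup (f := id) (Finset.mem_filter.mpr ⟨hp, hdc ▸ hpd⟩))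
        · have hcd : Disjoint c d := Q.disjoint hc hd (Ne.symm hdc)
          simp [(hcd.mono_right hpd).eq_bot]

variable [Lattice β] [IsModularLattice β] [OrderBot β]

theorem supIndep_of_le {P Q : Finpartition a} (hPQ : P ≤ Q) (φ : SupBotHom α β)
    (hP : P.parts.SupIndep φ) : Q.parts.SupIndep φ := by
  classical
  intro t ht c hc hct
  have hφ : ∀ d ∈ Q.parts, φ d = {p ∈ P.parts | p ≤ d}.sup φ := fun d hd =>
    (congrArg φ (sup_filter_le_eq_of_le hPQ hd)).symm.trans (map_finset_sup φ _ id)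
  have ht_le : t.sup φ ≤ {p ∈ P.parts | ¬p ≤ c}.sup φ := Finset.sup_le fun d hd => by
    rw [hφ d (ht hd)]
    refine Finset.sup_mono fun p hp => ?_
    obtain ⟨hpP, hpd⟩ := Finset.mem_filter.mp hp
    have hcd : Disjoint c d := Q.disjoint hc (ht hd) (fun h => hct (h ▸ hd))
    exact Finset.mem_filter.mpr
      ⟨hpP, fun hpc => P.ne_bot hpP (disjoint_self.mp (hcd.mono hpc hpd))⟩
  rw [hφ c hc]
  exact (hP.disjoint_sup_sup (Finset.filter_subset _ _) (Finset.filter_subset _ _)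
    (Finset.disjoint_filter_filter_not _ _ _)).mono_right ht_le

theorem supIndep_inf [DecidableEq α] {P Q : Finpartition a} {φ : α → β} (hφ : Monotone φ)
    (hP : P.parts.SupIndep φ) (hQ : Q.parts.SupIndep φ) : (P ⊓ Q).parts.SupIndep φ := by
  rw [parts_inf]
  refine Finset.SupIndep.subset (Finset.SupIndep.image ?_) (Finset.erase_subset _ _)
  exact Finset.SupIndep.product
    (hP.antitone_fun fun p _ => Finset.sup_le fun q _ => hφ inf_le_left)
    (hQ.antitone_fun fun q _ => Finset.sup_le fun p _ => hφ inf_le_right)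

end Finpartition

def Submodule.spanSupBotHom (K M : Type*) [Semiring K] [AddCommMonoid M] [Module K M]
    [DecidableEq M] : SupBotHom (Finset M) (Submodule K M) where
  toFun s := Submodule.span K (s : Set M)
  map_sup' s t := by rw [Finset.sup_eq_union, Finset.coe_union, Submodule.span_union]
  map_bot' := by simp

section Decomposition

variable {V : Type*} [DecidableEq V] {R : Finset V}

theorem IsDecompositionOf.exists_finpartition {D : Finset (Finset V)}
    (hD : IsDecompositionOf R D) : ∃ P : Finpartition R, P.parts = D :=
  ⟨{ parts := D
     supIndep := Finset.supIndep_iff_pairwiseDisjoint.mpr hD.2.1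
     sup_parts := hD.2.2
     bot_notMem := fun h => (hD.1 ∅ h).ne_empty rfl }, rfl⟩

theorem Finpartition.isDecompositionOf (P : Finpartition R) : IsDecompositionOf R P.parts :=
  ⟨fun _ => P.nonempty_of_mem_parts, P.disjoint, P.sup_parts⟩

theorem Finpartition.isRefinementOf_parts_iff {P Q : Finpartition R} :
    IsRefinementOf P.parts Q.parts ↔ P ≤ Q :=
  Iff.rfl

theorem isIndependentDecompositionOf_iff [AddCommGroup V] [Module ℝ V] {D : Finset (Finset V)} :
    IsIndependentDecompositionOf R D ↔
      IsDecompositionOf R D ∧ D.SupIndep (Submodule.spanSupBotHom ℝ V) := by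
  refine ⟨fun ⟨hD, hind, _⟩ => ⟨hD, iSupIndep_comp_coe_iff_supIndep.mp hind⟩,
    fun ⟨hD, hind⟩ => ⟨hD, iSupIndep_comp_coe_iff_supIndep.mpr hind, ?_⟩⟩
  calc (⨆ P : {P // P ∈ D}, Submodule.span ℝ ((P : Finset V) : Set V))
      = D.sup (Submodule.spanSupBotHom ℝ V) := by rw [Finset.sup_eq_iSup, iSup_subtype']; rfl
    _ = Submodule.spanSupBotHom ℝ V (D.sup id) := (map_finset_sup _ _ _).symm
    _ = Submodule.span ℝ (R : Set V) := by rw [hD.2.2]; rfl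

end Decomposition

theorem independent_decomposition_iff_coarsening_of_finest_general
    {V : Type*} [DecidableEq V] [AddCommGroup V] [Module ℝ V]
    (R : Finset V) (F : Finset (Finset V))
    (hF : IsIndependentDecompositionOf R F)
    (hFinest : ¬ ∃ D : Finset (Finset V), IsIndependentDecompositionOf R D ∧
      IsRefinementOf D F ∧ D ≠ F) :
    ∀ D : Finset (Finset V), IsDecompositionOf R D →
      (IsIndependentDecompositionOf R D ↔ IsRefinementOf F D) := by
  intro D hD
  obtain ⟨P, rfl⟩ := hF.1.exists_finpartition
  obtain ⟨Q, rfl⟩ := hD.exists_finpartition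
  rw [Finpartition.isRefinementOf_parts_iff, isIndependentDecompositionOf_iff]
  have hP := (isIndependentDecompositionOf_iff.mp hF).2
  refine ⟨fun ⟨_, hQ⟩ => ?_, fun hPQ => ⟨hD, P.supIndep_of_le hPQ _ hP⟩⟩
  have hPQ_indep : IsIndependentDecompositionOf R (P ⊓ Q).parts :=
    isIndependentDecompositionOf_iff.mpr ⟨(P ⊓ Q).isDecompositionOf,
      Finpartition.supIndep_inf (OrderHomClass.mono _) hP hQ⟩
  have hinf : P ⊓ Q = P := by
    by_contra hne
    exact hFinest ⟨_, hPQ_indep, Finpartition.isRefinementOf_parts_iff.mpr inf_le_left,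
      fun h => hne (Finpartition.ext h)⟩
  exact inf_eq_left.mp hinf

/-- If `F` is the finest independent decomposition of `R` (the unique independent
decomposition admitting no proper independent refinement), then a decomposition of `R`
is independent iff it is a coarsening of `F`. -/
theorem independent_decomposition_iff_coarsening_of_finest
    {V : Type*} [DecidableEq V] [AddCommGroup V] [Module ℝ V] [FiniteDimensional ℝ V]
    (R : Finset V) (hR : ∀ v ∈ R, v ≠ 0) (F : Finset (Finset V))
    (hF : IsIndependentDecompositionOf R F)
    (hFinest : ¬ ∃ D : Finset (Finset V), IsIndependentDecompositionOf R D ∧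
      IsRefinementOf D F ∧ D ≠ F) :
    ∀ D : Finset (Finset V), IsDecompositionOf R D →
      (IsIndependentDecompositionOf R D ↔ IsRefinementOf F D) :=
  independent_decomposition_iff_coarsening_of_finest_general R F hF hFinest
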